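/- Let k > 0 and let ξ(t) = kt√2 · e^{-3iπ/8} · √(1 + (t²/2)e^{iπ/4}) for real t (principal square roots). With α(ξ) = -√(i(ξ-k))√(-i(ξ+k)), one has α(ξ(t)) = ik - k t² e^{-iπ/4} for all sufficiently small real t. -/

import Mathlib

noncomputable def csqrt (z : ℂ) : ℂ := z ^ (1/2 : ℂ)

lemma sq_csqrt {z : ℂ} (hz : z ≠ 0) : csqrt z * csqrt z = z := by
  rw [csqrt, ← Complex.cpow_add _ _ hz]
  norm_num

lemma csqrt_re_nonneg (z : ℂ) : 0 ≤ (csqrt z).re := by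
  rcases eq_or_ne z 0 with rfl | hz
  · simp [csqrt, Complex.zero_cpow (by norm_num : (1/2:ℂ) ≠ 0)]
  · rw [csqrt, Complex.cpow_def_of_ne_zero hz, Complex.exp_re]
    apply mul_nonneg (Real.exp_pos _).le
    apply Real.cos_nonneg_of_mem_Icc
    constructor
    · have := Complex.neg_pi_lt_arg z
      simp [Complex.log_im, Complex.log_re, Complex.mul_im, Complex.mul_re]
      nlinarith [Real.pi_pos]
    · have := Complex.arg_le_pi z
      simp [Complex.log_im, Complex.log_re, Complex.mul_im, Complex.mul_re]
      nlinarith [Real.pi_pos]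

lemma csqrt_eq {z u : ℂ} (hu : u * u = z) (hre : 0 < u.re) : csqrt z = u := by
  have hu0 : u ≠ 0 := fun h => by simp [h] at hre
  have hz : z ≠ 0 := by rw [← hu]; exact mul_ne_zero hu0 hu0
  have h := sq_csqrt hz
  have h2 : (csqrt z - u) * (csqrt z + u) = 0 := by linear_combination h - hu
  rcases mul_eq_zero.1 h2 with h3 | h3
  · exact sub_eq_zero.1 h3
  · exfalso
    have h4 : csqrt z = -u := by linear_combination h3
    have := csqrt_re_nonneg z
    rw [h4] at this
    simp at this
    linarith

/-- α(ξ) = -√(i(ξ-k))·√(-i(ξ+k)) with principal square roots. -/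
noncomputable def alphaFn (k : ℝ) (ξ : ℂ) : ℂ :=
  -(csqrt (Complex.I * (ξ - (k : ℂ))) * csqrt (-Complex.I * (ξ + (k : ℂ))))

/-- Steepest-descent identity: with ξ(t) = kt√2 e^{-3iπ/8} √(1+(t²/2)e^{iπ/4}),
one has α(ξ(t)) = ik - kt² e^{-iπ/4} for all sufficiently small real t. -/
theorem stmt8 (k : ℝ) (hk : 0 < k) :
    ∃ δ > 0, ∀ t : ℝ, |t| < δ →
      alphaFn k ((k : ℂ) * (t : ℂ) * (Real.sqrt 2 : ℂ)
          * Complex.exp (-(3 * (Real.pi : ℂ) * Complex.I) / 8)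
          * csqrt (1 + ((t : ℂ)^2 / 2) * Complex.exp ((Real.pi : ℂ) * Complex.I / 4)))
        = Complex.I * (k : ℂ)
            - (k : ℂ) * (t : ℂ)^2 * Complex.exp (-((Real.pi : ℂ) * Complex.I) / 4) := by
  refine ⟨1, one_pos, fun t ht => ?_⟩
  set P : ℂ := Complex.exp ((Real.pi : ℂ) * Complex.I / 4) with hPd
  set D : ℂ := Complex.exp (-(3 * (Real.pi : ℂ) * Complex.I) / 8) with hDd
  set F : ℂ := Complex.exp (-((Real.pi : ℂ) * Complex.I) / 4) with hFd
  set r2 : ℂ := ((Real.sqrt 2 : ℝ) : ℂ) with hr2d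
  set z : ℂ := 1 + ((t : ℂ)^2 / 2) * P with hzd
  set S : ℂ := csqrt z with hSd
  set rk : ℂ := ((Real.sqrt k : ℝ) : ℂ) with hrkd
  -- re/im of the exponentials
  have hParg : (Real.pi : ℂ) * Complex.I / 4 = ((Real.pi/4 : ℝ) : ℂ) * Complex.I := by
    push_cast; ring
  have hFarg : -((Real.pi : ℂ) * Complex.I) / 4 = ((-(Real.pi/4) : ℝ) : ℂ) * Complex.I := by
    push_cast; ring
  have hPre : P.re = Real.sqrt 2 / 2 := by
    rw [hPd, hParg, Complex.exp_ofReal_mul_I_re, Real.cos_pi_div_four]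
  have hPim : P.im = Real.sqrt 2 / 2 := by
    rw [hPd, hParg, Complex.exp_ofReal_mul_I_im, Real.sin_pi_div_four]
  have hFre : F.re = Real.sqrt 2 / 2 := by
    rw [hFd, hFarg, Complex.exp_ofReal_mul_I_re, Real.cos_neg, Real.cos_pi_div_four]
  have hFim : F.im = -(Real.sqrt 2 / 2) := by
    rw [hFd, hFarg, Complex.exp_ofReal_mul_I_im, Real.sin_neg, Real.sin_pi_div_four]
  have sqrt2_pos : 0 < Real.sqrt 2 := Real.sqrt_pos.2 (by norm_num)
  -- algebraic relations
  have h1 : rk * rk = (k : ℂ) := by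
    rw [hrkd, ← Complex.ofReal_mul, Real.mul_self_sqrt hk.le]
  have h2 : r2 * r2 = 2 := by
    rw [hr2d, ← Complex.ofReal_mul, Real.mul_self_sqrt (by norm_num : (0:ℝ) ≤ 2)]
    norm_num
  have h3 : F * P = 1 := by
    rw [hFd, hPd, ← Complex.exp_add]
    have : -((Real.pi : ℂ) * Complex.I) / 4 + (Real.pi : ℂ) * Complex.I / 4 = 0 := by ring
    rw [this, Complex.exp_zero]
  have h4 : F * F = -Complex.I := by
    rw [hFd, ← Complex.exp_add]
    have : -((Real.pi : ℂ) * Complex.I) / 4 + -((Real.pi : ℂ) * Complex.I) / 4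
        = ((-(Real.pi/2) : ℝ) : ℂ) * Complex.I := by push_cast; ring
    rw [this]
    refine Complex.ext ?_ ?_
    · rw [Complex.exp_ofReal_mul_I_re]; simp [Real.cos_pi_div_two]
    · rw [Complex.exp_ofReal_mul_I_im]; simp [Real.sin_pi_div_two]
  have h5 : D * D * P = -Complex.I := by
    rw [hDd, hPd, ← Complex.exp_add, ← Complex.exp_add]
    have : -(3 * (Real.pi : ℂ) * Complex.I) / 8 + -(3 * (Real.pi : ℂ) * Complex.I) / 8
        + (Real.pi : ℂ) * Complex.I / 4 = ((-(Real.pi/2) : ℝ) : ℂ) * Complex.I := by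
      push_cast; ring
    rw [this]
    refine Complex.ext ?_ ?_
    · rw [Complex.exp_ofReal_mul_I_re]; simp [Real.cos_pi_div_two]
    · rw [Complex.exp_ofReal_mul_I_im]; simp [Real.sin_pi_div_two]
  have h7 : Complex.I * Complex.I = -1 := Complex.I_mul_I
  -- facts about z and S
  have hzre : z.re = 1 + t^2/2 * (Real.sqrt 2 / 2) := by
    have ht2 : ((t : ℂ)^2 / 2) = ((t^2/2 : ℝ) : ℂ) := by push_cast; ring
    rw [hzd, ht2, Complex.add_re, Complex.one_re, Complex.re_ofReal_mul, hPre]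
  have hzim : z.im = t^2/2 * (Real.sqrt 2 / 2) := by
    have ht2 : ((t : ℂ)^2 / 2) = ((t^2/2 : ℝ) : ℂ) := by push_cast; ring
    rw [hzd, ht2, Complex.add_im, Complex.one_im, Complex.im_ofReal_mul, hPim]
    ring
  have hz0 : z ≠ 0 := by
    intro h
    rw [h] at hzre
    simp at hzre
    nlinarith [sq_nonneg t]
  have h6 : S * S = z := sq_csqrt hz0
  have hSre0 : 0 ≤ S.re := csqrt_re_nonneg z
  have hSre : 1 ≤ S.re := by
    have h := congrArg Complex.re h6
    rw [Complex.mul_re] at h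
    nlinarith [sq_nonneg t]
  have hSim : 0 ≤ S.im := by
    have h := congrArg Complex.im h6
    rw [Complex.mul_im] at h
    nlinarith [sq_nonneg t]
  -- the two square roots
  set u : ℂ := rk * (Complex.I * D * P * (t : ℂ) * r2 / 2 + F * S) with hud
  set v : ℂ := rk * (F * S - Complex.I * D * P * (t : ℂ) * r2 / 2) with hvd
  have habsW : ‖(Complex.I * D * P * (t : ℂ) * r2 / 2)‖ = Real.sqrt 2 / 2 * |t| := by
    rw [norm_div, norm_mul, norm_mul, norm_mul, norm_mul]
    rw [hDd, hPd, hr2d, hParg]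
    have hDarg : -(3 * (Real.pi : ℂ) * Complex.I) / 8
        = ((-(3*Real.pi/8) : ℝ) : ℂ) * Complex.I := by push_cast; ring
    rw [hDarg, Complex.norm_exp_ofReal_mul_I, Complex.norm_exp_ofReal_mul_I]
    simp [Complex.norm_real, Complex.norm_I, abs_of_nonneg (Real.sqrt_nonneg 2)]
    ring
  have hWre : -(Real.sqrt 2 / 2 * |t|) ≤ (Complex.I * D * P * (t : ℂ) * r2 / 2).re := by
    rw [← habsW]; exact (abs_le.1 (Complex.abs_re_le_norm _)).1
  have hWre' : (Complex.I * D * P * (t : ℂ) * r2 / 2).re ≤ Real.sqrt 2 / 2 * |t| := by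
    rw [← habsW]; exact Complex.re_le_norm _
  have hsqk : 0 < Real.sqrt k := Real.sqrt_pos.2 hk
  have hreu : 0 < u.re := by
    rw [hud, hrkd, Complex.re_ofReal_mul]
    apply mul_pos hsqk
    rw [Complex.add_re, Complex.mul_re, hFre, hFim]
    nlinarith [mul_pos (by positivity : (0:ℝ) < Real.sqrt 2 / 2) (sub_pos.2 ht)]
  have hrev : 0 < v.re := by
    rw [hvd, hrkd, Complex.re_ofReal_mul]
    apply mul_pos hsqk
    rw [Complex.sub_re, Complex.mul_re, hFre, hFim]
    nlinarith [mul_pos (by positivity : (0:ℝ) < Real.sqrt 2 / 2) (sub_pos.2 ht)]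
  set X : ℂ := (k : ℂ) * (t : ℂ) * r2 * D * S with hXd
  have eqA : u * u = Complex.I * (X - (k : ℂ)) := by
    rw [hud, hXd]
    linear_combination
      ((1/4 : ℂ)*r2^2*P^2*D^2*Complex.I^2*(t:ℂ)^2 + r2*F*P*D*S*Complex.I*(t:ℂ) + F^2*S^2) * h1
      + ((1/4 : ℂ)*P^2*D^2*Complex.I^2*(t:ℂ)^2*(k:ℂ)) * h2
      + (r2*D*S*Complex.I*(t:ℂ)*(k:ℂ)) * h3
      + (S^2*(k:ℂ)) * h4
      + ((1/2 : ℂ)*P*Complex.I^2*(t:ℂ)^2*(k:ℂ)) * h5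
      + (Complex.I^3*(k:ℂ)) * h6
      + ((-(S^2*Complex.I*(k:ℂ)) + Complex.I*(k:ℂ))) * h7
  have eqB : v * v = -Complex.I * (X + (k : ℂ)) := by
    rw [hvd, hXd]
    linear_combination
      ((1/4 : ℂ)*r2^2*P^2*D^2*Complex.I^2*(t:ℂ)^2 - r2*F*P*D*S*Complex.I*(t:ℂ) + F^2*S^2) * h1
      + ((1/4 : ℂ)*P^2*D^2*Complex.I^2*(t:ℂ)^2*(k:ℂ)) * h2
      + (-(r2*D*S*Complex.I*(t:ℂ)*(k:ℂ))) * h3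
      + (S^2*(k:ℂ)) * h4
      + ((1/2 : ℂ)*P*Complex.I^2*(t:ℂ)^2*(k:ℂ)) * h5
      + (Complex.I^3*(k:ℂ)) * h6
      + ((-(S^2*Complex.I*(k:ℂ)) + Complex.I*(k:ℂ))) * h7
  have e1 : csqrt (Complex.I * (X - (k : ℂ))) = u := csqrt_eq eqA hreu
  have e2 : csqrt (-Complex.I * (X + (k : ℂ))) = v := csqrt_eq eqB hrev
  show alphaFn k X = Complex.I * (k : ℂ) - (k : ℂ) * (t : ℂ)^2 * F
  rw [alphaFn, e1, e2, hud, hvd]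
  linear_combination
    ((1/4 : ℂ)*r2^2*P^2*D^2*Complex.I^2*(t:ℂ)^2 - F^2*S^2) * h1
    + ((1/4 : ℂ)*P^2*D^2*Complex.I^2*(t:ℂ)^2*(k:ℂ)) * h2
    + (-(F*(t:ℂ)^2*(k:ℂ))) * h3
    + (-(S^2*(k:ℂ)) + P*(t:ℂ)^2*(k:ℂ)) * h4
    + ((1/2 : ℂ)*P*Complex.I^2*(t:ℂ)^2*(k:ℂ)) * h5
    + (Complex.I^3*(k:ℂ) + 2*Complex.I*(k:ℂ)) * h6
    + ((-(S^2*Complex.I*(k:ℂ)) + Complex.I*(k:ℂ))) * h7
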